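/- arXiv:1409.0971 — 3 statements merged into one kernel-verified Lean document; each statement's English description precedes it below -/
import Mathlib

section
/- Let k_1 ≥ 4 be an even integer and g an integer. Then (g, 2k_1+1) ∈ S2 if and only if (g + 3k_1 + 3, 2k_1 + 4) ∈ T1 and L(g + 3k_1 + 3, 2k_1 + 4) < 0. (This is the precise form of the correspondence in Corollary 'final2' between S2 and T1 under the shift (g,k) ↦ (g + 3(k+1)/2, k+3) of construction 3.) -/
/-!
Under the shift `(g, 2k₁+1) ↦ (g + 3k₁ + 3, 2(k₁+2))` the congruence and size conditions on `k`
match for even `k₁ ≥ 4`, and the two lower bounds on `g` coincide, since `(k₁+2) - 4 = k₁ - 2` and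
`(k₁+2)² - 2 - (3k₁+3) = k₁² + k₁ - 1`. The condition `L < 0` reads `g ≤ k₁² + k₁`, which is the
upper bound of `S2` and implies the (weaker) upper bound of `T1`.
-/

/-- `L(g,k)` for even `k = 2k₁`: `L = 2g − 2k₁²`. -/
def Leven (g k1 : ℤ) : ℤ := 2 * g - 2 * k1 ^ 2

/-- `S2 = {(g,k) : k = 2k₁+1 ≥ 9, k ≡ 1 (mod 4), k₁²+k₁−1−⌊(k₁−2)²/12⌋ ≤ g ≤ k₁²+k₁}`. -/
def S2 : Set (ℤ × ℤ) :=
  {p | ∃ g k1 : ℤ, p = (g, 2 * k1 + 1) ∧ 9 ≤ 2 * k1 + 1 ∧ (2 * k1 + 1) % 4 = 1 ∧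
    k1 ^ 2 + k1 - 1 - (k1 - 2) ^ 2 / 12 ≤ g ∧ g ≤ k1 ^ 2 + k1}

/-- `T1 = {(g,k) : k = 2k₁ ≥ 8, k ≡ 0 (mod 4), k₁²−2−⌊(k₁−4)²/12⌋ ≤ g ≤ k₁²+k₁}`. -/
def T1 : Set (ℤ × ℤ) :=
  {p | ∃ g k1 : ℤ, p = (g, 2 * k1) ∧ 8 ≤ 2 * k1 ∧ (2 * k1) % 4 = 0 ∧
    k1 ^ 2 - 2 - (k1 - 4) ^ 2 / 12 ≤ g ∧ g ≤ k1 ^ 2 + k1}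

theorem mk_mem_S2_iff (g k1 : ℤ) :
    (g, 2 * k1 + 1) ∈ S2 ↔
      4 ≤ k1 ∧ Even k1 ∧ k1 ^ 2 + k1 - 1 - (k1 - 2) ^ 2 / 12 ≤ g ∧ g ≤ k1 ^ 2 + k1 := by
  rw [Int.even_iff]
  constructor
  · rintro ⟨g', k', hp, h9, hmod, hlo, hhi⟩
    obtain ⟨rfl, hk⟩ := Prod.mk.inj hp
    obtain rfl : k' = k1 := by omega
    exact ⟨by omega, by omega, hlo, hhi⟩
  · rintro ⟨h4, hev, hlo, hhi⟩
    exact ⟨g, k1, rfl, by omega, by omega, hlo, hhi⟩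

theorem mk_mem_T1_iff (g k1 : ℤ) :
    (g, 2 * k1) ∈ T1 ↔
      4 ≤ k1 ∧ Even k1 ∧ k1 ^ 2 - 2 - (k1 - 4) ^ 2 / 12 ≤ g ∧ g ≤ k1 ^ 2 + k1 := by
  rw [Int.even_iff]
  constructor
  · rintro ⟨g', k', hp, h8, hmod, hlo, hhi⟩
    obtain ⟨rfl, hk⟩ := Prod.mk.inj hp
    obtain rfl : k' = k1 := by omega
    exact ⟨by omega, by omega, hlo, hhi⟩
  · rintro ⟨h4, hev, hlo, hhi⟩
    exact ⟨g, k1, rfl, by omega, by omega, hlo, hhi⟩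

theorem Leven_neg_iff (g k1 : ℤ) : Leven g k1 < 0 ↔ g < k1 ^ 2 := by
  unfold Leven
  omega

/-- Let `k₁ ≥ 4` be an even integer and `g` an integer.  Then `(g, 2k₁+1) ∈ S2` if and only
if `(g + 3k₁ + 3, 2k₁ + 4) ∈ T1` and `L(g + 3k₁ + 3, 2k₁ + 4) < 0` (where
`2k₁ + 4 = 2(k₁+2)` is even, so `L` is computed with the even-parity convention). -/
theorem mem_S2_iff_shift_mem_T1 (k1 g : ℤ) (hk1 : 4 ≤ k1) (hev : Even k1) :
    (g, 2 * k1 + 1) ∈ S2 ↔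
      ((g + 3 * k1 + 3, 2 * k1 + 4) ∈ T1 ∧ Leven (g + 3 * k1 + 3) (k1 + 2) < 0) := by
  have hev2 : Even (k1 + 2) := hev.add even_two
  rw [show 2 * k1 + 4 = 2 * (k1 + 2) by ring, mk_mem_S2_iff, mk_mem_T1_iff, Leven_neg_iff,
    show k1 + 2 - 4 = k1 - 2 by ring, show (k1 + 2) ^ 2 = k1 ^ 2 + 4 * k1 + 4 by ring]
  simp only [hk1, hev, hev2, true_and]
  omega
end

section
/- Every (k+n)×(2g-2) integer matrix c satisfying conditions (C1)-(C6) has all entries nonnegative. (This is Lemma A.4: the entries of the uniquely determined matrix c^Γ are all nonnegative.) -/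
namespace BFM

/-- The sequence `a(k) = (0,0,1,1,…,k₁−1,k₁−1,k₁)`, indexed from `1`:
its `i`-th entry is `⌊(i−1)/2⌋`. -/
def seqA (i : ℤ) : ℤ := (i - 1) / 2

/-- The number of indices `i ∈ {1,…,K}` with `a i = x` (the multiplicity of `x` in the
sequence `a` of length `K`). -/
noncomputable def multCount (K : ℤ) (a : ℤ → ℤ) (x : ℤ) : ℕ :=
  ((Finset.Icc (1 : ℤ) K).filter fun i => a i = x).card

/-- `(i₁, i₂)` is a pair of special indices for the pair of sequences `(a, b)` of length
`K` with respect to `d`: `i₁ < i₂` and both row sums equal `d`. -/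
def IsSpecialPair (K d : ℤ) (a b : ℤ → ℤ) (i1 i2 : ℤ) : Prop :=
  1 ≤ i1 ∧ i1 < i2 ∧ i2 ≤ K ∧ a i1 + b i1 = d ∧ a i2 + b i2 = d

/-- Condition (I) for a nondecreasing sequence `a` and a nonincreasing sequence `b`, both
of length `K` (indices `1,…,K`), with respect to `d`. -/
structure CondI (K d : ℤ) (a b : ℤ → ℤ) : Prop where
  mono : ∀ i i', 1 ≤ i → i ≤ i' → i' ≤ K → a i ≤ a i'
  anti : ∀ i i', 1 ≤ i → i ≤ i' → i' ≤ K → b i' ≤ b i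
  sum_le : ∀ i, 1 ≤ i → i ≤ K → a i + b i ≤ d
  le_sum : ∀ i, 1 ≤ i → i ≤ K → d - 1 ≤ a i + b i
  special : ∃! p : ℤ × ℤ, IsSpecialPair K d a b p.1 p.2
  a_mult : ∀ x : ℤ, multCount K a x ≤ 2
  b_mult : ∀ x : ℤ, multCount K b x ≤ 2
  no_extra : ∀ i1 i2, IsSpecialPair K d a b i1 i2 →
    ∀ i, 1 ≤ i → i ≤ K → i ≠ i1 → i ≠ i2 → ¬(a i = a i1 ∧ b i = b i2)

/-- Condition (II) for a nondecreasing sequence `a` and a nonincreasing sequence `b`, both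
of length `K` (indices `1,…,K`), with respect to `d`. -/
structure CondII (K d : ℤ) (a b : ℤ → ℤ) : Prop where
  mono : ∀ i i', 1 ≤ i → i ≤ i' → i' ≤ K → a i ≤ a i'
  anti : ∀ i i', 1 ≤ i → i ≤ i' → i' ≤ K → b i' ≤ b i
  sum_le : ∀ i, 1 ≤ i → i ≤ K → a i + b i ≤ d + 1
  le_sum : ∀ i, 1 ≤ i → i ≤ K → d - 1 ≤ a i + b i
  exists_ell : ∃ l, 1 ≤ l ∧ l ≤ K ∧ a l + b l = d + 1
  a_mult : ∀ x : ℤ, multCount K a x ≤ 2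
  b_mult : ∀ x : ℤ, multCount K b x ≤ 2
  exists_istar : ∃ istar, 1 ≤ istar ∧ istar < K ∧ a istar = a (istar + 1) ∧
    a istar + b istar = d ∧ a (istar + 1) + b (istar + 1) = d ∧
    (∀ x y : ℤ, (x, y) ≠ (a istar, b istar) →
      ((Finset.Icc (1 : ℤ) K).filter fun i => a i = x ∧ b i = y).card ≤ 1) ∧
    (∀ x : ℤ, (x, d - x) ≠ (a istar, b istar) →
      ((Finset.Icc (1 : ℤ) K).filter fun i => x ≤ a i ∧ d - x ≤ b i).card ≤ 1)
  no_consec : ¬ ∃ i, 1 ≤ i ∧ i + 1 ≤ K ∧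
    a i + b i = d - 1 ∧ a (i + 1) + b (i + 1) = d - 1 ∧ a (i + 1) = a i + 1 ∧
    multCount K a (a i) = 1 ∧ multCount K a (a (i + 1)) = 1 ∧
    multCount K b (b i) = 1 ∧ multCount K b (b (i + 1)) = 1

/-- The data of the inductive construction of Lemma C1 / Proposition A.1: the parameters
`k₁, g, m, N, T`, the componentwise degrees `d`, the positions `jpos` of the odd degrees,
and the `k×(2g−2)` matrix `a` of prescribed vanishing orders. -/
structure StdData where
  k1 : ℤ
  g : ℤ
  m : ℤ
  N : ℤ
  T : ℤ
  d : ℤ → ℤ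
  jpos : ℤ → ℤ
  a : ℤ → ℤ → ℤ

namespace StdData

variable (S : StdData)

/-- `k = 2k₁ + 1`. -/
def k : ℤ := 2 * S.k1 + 1

/-- `n = 2m`. -/
def n : ℤ := 2 * S.m

/-- `d̂ⱼ = dⱼ + 2N`. -/
def dhat (j : ℤ) : ℤ := S.d j + 2 * S.N

/-- The matrix `a` extended by the boundary columns: column `0` is `a(k)` and column
`2g−1` is the reverse of `a(k)`. -/
def aext (i j : ℤ) : ℤ :=
  if j = 0 then seqA i
  else if j = 2 * S.g - 1 then seqA (2 * S.k1 + 2 - i)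
  else S.a i j

/-- `j_{t+1}`, with the convention that beyond `t = 2T` it is `g + 1`. -/
def jnext (t : ℤ) : ℤ := if t < 2 * S.T then S.jpos (t + 1) else S.g + 1

/-- The prescribed boundary column `c_{•,2g−1}` of length `k + n`:
`(N+k₁, N+k₁−1, N+k₁−1, …, N, N, N−1−k₁, N−2−k₁, N−2−k₁, …, N−m−k₁, N−m−k₁, N−m−k₁−1)`. -/
def lastCol (i : ℤ) : ℤ :=
  if i ≤ 2 * S.k1 + 1 then S.N + S.k1 - i / 2
  else S.N - 1 - S.k1 - (i - (2 * S.k1 + 1)) / 2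

/-- A `(k+n)×(2g−2)` matrix `c` extended by the boundary columns: column `0` is `a(k+n)`
and column `2g−1` is `lastCol`. -/
def cext (c : ℤ → ℤ → ℤ) (i j : ℤ) : ℤ :=
  if j = 0 then seqA i
  else if j = 2 * S.g - 1 then S.lastCol i
  else c i j

/-- The number of `t ∈ {1,…,2T}` with `j_t < j`. -/
noncomputable def oddCountBelow (j : ℤ) : ℕ :=
  ((Finset.Icc (1 : ℤ) (2 * S.T)).filter fun t => S.jpos t < j).card

/-- The hypothesis package: the constraints on the parameters and the componentwise
degrees, together with `(g,k)`-standardness (s1)–(s6) of the matrix `a`. -/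
structure Std : Prop where
  hk1 : 2 ≤ S.k1
  hg : 3 ≤ S.g
  hm : 1 ≤ S.m
  hN : S.k1 + S.m < S.N
  hT : 1 ≤ S.T
  hd_mem : ∀ j, 1 ≤ j → j ≤ S.g →
    S.d j = 2 * S.g - 3 ∨ S.d j = 2 * S.g - 2 ∨ S.d j = 2 * S.g - 1
  hd_one : S.d 1 = 2 * S.g - 2
  hd_g : S.d S.g = 2 * S.g - 2
  hj_mono : ∀ t t', 1 ≤ t → t < t' → t' ≤ 2 * S.T → S.jpos t < S.jpos t'
  hj_range : ∀ t, 1 ≤ t → t ≤ 2 * S.T → 1 ≤ S.jpos t ∧ S.jpos t ≤ S.g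
  hj_one : S.jpos 1 = 2
  hodd_iff : ∀ j, 1 ≤ j → j ≤ S.g →
    (Odd (S.d j) ↔ ∃ t, 1 ≤ t ∧ t ≤ 2 * S.T ∧ S.jpos t = j)
  hd_odd : ∀ s, 1 ≤ s → s ≤ S.T →
    S.d (S.jpos (2 * s - 1)) = 2 * S.g - 1 ∧ S.d (S.jpos (2 * s)) = 2 * S.g - 3
  ha_nonneg : ∀ i j, 1 ≤ i → i ≤ S.k → 1 ≤ j → j ≤ 2 * S.g - 2 → 0 ≤ S.a i j
  hs1 : ∀ i j, 1 ≤ i → i ≤ S.k → 1 ≤ j → j ≤ S.g - 1 →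
    S.a i (2 * j - 1) + S.a i (2 * j) = S.g - 1
  hs2 : ∀ j, 1 ≤ j → j ≤ S.g → S.d j = 2 * S.g - 2 →
    CondI S.k (S.g - 1) (fun i => S.aext i (2 * j - 2)) (fun i => S.aext i (2 * j - 1))
  hs3a : ∀ j, 1 ≤ j → j ≤ S.g → S.d j = 2 * S.g - 1 →
    CondII S.k (S.g - 1) (fun i => S.aext i (2 * j - 2)) (fun i => S.aext i (2 * j - 1))
  hs3b : ∀ j, 1 ≤ j → j ≤ S.g → S.d j = 2 * S.g - 3 →
    CondII S.k (S.g - 2) (fun i => S.aext i (2 * j - 2)) (fun i => S.aext i (2 * j - 1))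
  hs4 : S.a S.k 2 + S.a S.k 3 = S.g - 1
  hs5 : ∀ t, 1 ≤ t → t ≤ 2 * S.T →
    S.aext S.k (2 * S.jpos t - 2) ≤ S.k1 + S.jpos t - 1 ∧
    (S.aext S.k (2 * S.jpos t - 2) = S.k1 + S.jpos t - 2 →
      Even t ∨
        S.aext S.k (2 * S.jpos t - 2) + S.aext S.k (2 * S.jpos t - 1) =
          (S.d (S.jpos t) - 1) / 2) ∧
    (S.aext S.k (2 * S.jpos t - 2) = S.k1 + S.jpos t - 1 →
      Odd t ∧ S.aext (S.k - 1) (2 * S.jpos t - 2) < S.aext S.k (2 * S.jpos t - 2))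
  hs6 : ∀ t, 1 ≤ t → t ≤ 2 * S.T →
    S.aext S.k (2 * S.jpos t - 1) = S.g - 1 - S.k1 - S.jpos t →
    ∀ j, S.jpos t < j → j < S.jnext t →
      S.aext S.k (2 * j - 2) + S.aext S.k (2 * j - 1) = S.g - 2

/-- Conditions (C1)–(C6) on a `(k+n)×(2g−2)` integer matrix `c`. -/
def CondC (c : ℤ → ℤ → ℤ) : Prop :=
  -- (C1): the first k rows of c equal â, i.e. a with N added in every odd-indexed column
  (∀ i j, 1 ≤ i → i ≤ S.k → 1 ≤ j → j ≤ 2 * S.g - 2 →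
    c i j = S.a i j + if Odd j then S.N else 0) ∧
  -- (C2)
  (∀ i j, 1 ≤ i → i ≤ S.k + S.n → 1 ≤ j → j ≤ S.g - 1 →
    c i (2 * j - 1) + c i (2 * j) = S.g + S.N - 1) ∧
  -- (C3)
  (∀ j, 1 ≤ j → j ≤ S.g → Even (S.d j) →
    CondI (S.k + S.n) (S.dhat j / 2)
      (fun i => S.cext c i (2 * j - 2)) (fun i => S.cext c i (2 * j - 1))) ∧
  -- (C4)
  (∀ j, 1 ≤ j → j ≤ S.g → Odd (S.d j) →
    CondII (S.k + S.n) ((S.dhat j - 1) / 2)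
      (fun i => S.cext c i (2 * j - 2)) (fun i => S.cext c i (2 * j - 1))) ∧
  -- (C5)
  (∀ i t, S.k + 1 ≤ i → i ≤ S.k + S.n → 1 ≤ t → t < 2 * S.T →
    (S.cext c i (2 * S.jpos t - 2) + S.cext c i (2 * S.jpos t - 1) =
        (S.dhat (S.jpos t) - 1) / 2 →
      S.cext c i (2 * S.jpos (t + 1) - 2) + S.cext c i (2 * S.jpos (t + 1) - 1) =
        (S.dhat (S.jpos (t + 1)) - 1) / 2 - 1) ∧
    (S.cext c i (2 * S.jpos t - 2) + S.cext c i (2 * S.jpos t - 1) =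
        (S.dhat (S.jpos t) - 1) / 2 - 1 →
      S.cext c i (2 * S.jpos (t + 1) - 2) + S.cext c i (2 * S.jpos (t + 1) - 1) =
        (S.dhat (S.jpos (t + 1)) - 1) / 2)) ∧
  -- (C6)
  c (S.k + S.n) 2 + c (S.k + S.n) 3 = (S.dhat 2 - 1) / 2

end StdData

/-!
Columns `2j-2` of the extended matrix are nondecreasing and columns `2j-1` nonincreasing, so
it suffices to bound the first row on even columns, where `c` agrees with `a ≥ 0`, and the last
row on odd columns. Along the last row, (C2) and the row-sum bound `c_{2j} + c_{2j+1} ≤ g+N-1`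
make the odd columns nonincreasing in `j`, down to the boundary entry `N-1-k₁-m ≥ 0`. The
row-sum bound is part of (C3)/(C4) except at the degrees `dⱼ = 2g-1`, where (C4) allows
`g+N`; there the chain (C6), (C5) pins the sum to `g+N-1`.
-/

theorem CondI.monotoneOn {K d : ℤ} {a b : ℤ → ℤ} (h : CondI K d a b) :
    MonotoneOn a (Set.Icc 1 K) :=
  fun _ hi _ hi' hle => h.mono _ _ hi.1 hle hi'.2

theorem CondI.antitoneOn {K d : ℤ} {a b : ℤ → ℤ} (h : CondI K d a b) :
    AntitoneOn b (Set.Icc 1 K) :=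
  fun _ hi _ hi' hle => h.anti _ _ hi.1 hle hi'.2

theorem CondII.monotoneOn {K d : ℤ} {a b : ℤ → ℤ} (h : CondII K d a b) :
    MonotoneOn a (Set.Icc 1 K) :=
  fun _ hi _ hi' hle => h.mono _ _ hi.1 hle hi'.2

theorem CondII.antitoneOn {K d : ℤ} {a b : ℤ → ℤ} (h : CondII K d a b) :
    AntitoneOn b (Set.Icc 1 K) :=
  fun _ hi _ hi' hle => h.anti _ _ hi.1 hle hi'.2

theorem eq_of_alternating {f u : ℤ → ℤ} {M : ℤ} (h1 : f 1 = u 1)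
    (hstep : ∀ t, 1 ≤ t → t < M →
      (f t = u t → f (t + 1) = u (t + 1) - 1) ∧ (f t = u t - 1 → f (t + 1) = u (t + 1))) :
    ∀ t, 1 ≤ t → t ≤ M → Odd t → f t = u t := by
  suffices h :
      ∀ t, 1 ≤ t → t ≤ M → (Odd t → f t = u t) ∧ (Even t → f t = u t - 1) from
    fun t h1 hM => (h t h1 hM).1
  intro t ht
  induction t, ht using Int.leInduction with
  | base => exact fun _ => ⟨fun _ => h1, fun h => absurd h (by decide)⟩
  | succ t ht ih =>
    intro hM
    have ih := ih (by omega)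
    have step := hstep t ht (by omega)
    rcases Int.even_or_odd t with he | ho
    · exact ⟨fun _ => step.2 (ih.2 he), fun h => absurd he (Int.even_add_one.mp h)⟩
    · exact ⟨fun h => absurd (odd_add_one.mp h) (Int.not_even_iff_odd.mpr ho),
        fun _ => step.1 (ih.1 ho)⟩

namespace StdData

variable {S : StdData} {c : ℤ → ℤ → ℤ}

theorem cext_eq_self {i j : ℤ} (h1 : 1 ≤ j) (h2 : j ≤ 2 * S.g - 2) :
    S.cext c i j = c i j := by
  simp only [cext]
  rw [if_neg (by omega), if_neg (by omega)]

theorem cext_last (i : ℤ) : S.cext c i (2 * S.g - 1) = S.lastCol i := by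
  unfold cext
  rw [if_neg (by omega), if_pos rfl]

theorem lastCol_k_add_n (hm : 1 ≤ S.m) : S.lastCol (S.k + S.n) = S.N - 1 - S.k1 - S.m := by
  unfold lastCol k n
  rw [if_neg (by omega)]
  omega

theorem Std.one_le_k (hS : S.Std) : 1 ≤ S.k := by
  have := hS.hk1
  simp only [k]
  omega

theorem Std.k_lt_k_add_n (hS : S.Std) : S.k < S.k + S.n := by
  have := hS.hm
  simp only [n]
  omega

theorem CondC.monotoneOn_col (hc : S.CondC c) {j : ℤ} (h1 : 1 ≤ j) (hg : j ≤ S.g) :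
    MonotoneOn (fun i => S.cext c i (2 * j - 2)) (Set.Icc 1 (S.k + S.n)) := by
  obtain ⟨-, -, hC3, hC4, -, -⟩ := hc
  rcases Int.even_or_odd (S.d j) with he | ho
  · exact (hC3 j h1 hg he).monotoneOn
  · exact (hC4 j h1 hg ho).monotoneOn

theorem CondC.antitoneOn_col (hc : S.CondC c) {j : ℤ} (h1 : 1 ≤ j) (hg : j ≤ S.g) :
    AntitoneOn (fun i => S.cext c i (2 * j - 1)) (Set.Icc 1 (S.k + S.n)) := by
  obtain ⟨-, -, hC3, hC4, -, -⟩ := hc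
  rcases Int.even_or_odd (S.d j) with he | ho
  · exact (hC3 j h1 hg he).antitoneOn
  · exact (hC4 j h1 hg ho).antitoneOn

theorem CondC.lastRow_sum_of_odd (hS : S.Std) (hc : S.CondC c) {t : ℤ} (h1 : 1 ≤ t)
    (hT : t ≤ 2 * S.T) (ht : Odd t) :
    S.cext c (S.k + S.n) (2 * S.jpos t - 2) + S.cext c (S.k + S.n) (2 * S.jpos t - 1) =
      (S.dhat (S.jpos t) - 1) / 2 := by
  obtain ⟨-, -, -, -, hC5, hC6⟩ := hc
  have hK := hS.k_lt_k_add_n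
  have hg := hS.hg
  refine eq_of_alternating
    (f := fun t => S.cext c (S.k + S.n) (2 * S.jpos t - 2) +
      S.cext c (S.k + S.n) (2 * S.jpos t - 1))
    (u := fun t => (S.dhat (S.jpos t) - 1) / 2) ?_
    (fun t h1 hT => hC5 _ t (by omega) le_rfl h1 hT) t h1 hT ht
  rw [hS.hj_one, cext_eq_self (by omega) (by omega), cext_eq_self (by omega) (by omega)]
  exact hC6

theorem CondC.lastRow_sum_le (hS : S.Std) (hc : S.CondC c) {j : ℤ} (h2 : 2 ≤ j)
    (hg : j ≤ S.g) :
    S.cext c (S.k + S.n) (2 * j - 2) + S.cext c (S.k + S.n) (2 * j - 1) ≤ S.g + S.N - 1 := by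
  have hK : 1 ≤ S.k + S.n := by linarith [hS.one_le_k, hS.k_lt_k_add_n]
  have hdhat : S.dhat j = S.d j + 2 * S.N := rfl
  have hC3 := hc.2.2.1
  have hC4 := hc.2.2.2.1
  rcases hS.hd_mem j (by omega) hg with hd | hd | hd
  · have := (hC4 j (by omega) hg ⟨S.g - 2, by omega⟩).sum_le _ hK le_rfl
    omega
  · have := (hC3 j (by omega) hg ⟨S.g - 1, by omega⟩).sum_le _ hK le_rfl
    omega
  · obtain ⟨t, ht1, htT, rfl⟩ := (hS.hodd_iff _ (by omega) hg).mp ⟨S.g - 1, by omega⟩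
    have ht : Odd t := by
      by_contra he
      obtain ⟨s, rfl⟩ := Int.not_odd_iff_even.mp he
      have := (hS.hd_odd s (by omega) (by omega)).2
      rw [two_mul] at this
      omega
    have := hc.lastRow_sum_of_odd hS ht1 htT ht
    omega

theorem CondC.lastRow_oddCol_nonneg (hS : S.Std) (hc : S.CondC c) {j : ℤ} (h1 : 1 ≤ j)
    (hg : j ≤ S.g) : 0 ≤ S.cext c (S.k + S.n) (2 * j - 1) := by
  have hK : 1 ≤ S.k + S.n := by linarith [hS.one_le_k, hS.k_lt_k_add_n]
  have hC2 := hc.2.1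
  have hanti : AntitoneOn (fun j => S.cext c (S.k + S.n) (2 * j - 1)) (Set.Icc 1 S.g) := by
    refine antitoneOn_of_add_one_le Set.ordConnected_Icc fun j _ hj hj' => ?_
    have hrow := hC2 (S.k + S.n) j hK le_rfl hj.1 (by linarith [hj'.2])
    have hsum := hc.lastRow_sum_le hS (j := j + 1) (by linarith [hj.1]) hj'.2
    rw [show 2 * (j + 1) - 2 = 2 * j by ring, cext_eq_self (by linarith [hj.1])
      (by linarith [hj'.2])] at hsum
    show S.cext c _ (2 * (j + 1) - 1) ≤ S.cext c _ (2 * j - 1)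
    rw [cext_eq_self (j := 2 * j - 1) (by linarith [hj.1]) (by linarith [hj'.2])]
    linarith
  calc 0 ≤ S.N - 1 - S.k1 - S.m := by linarith [hS.hN]
    _ = S.cext c (S.k + S.n) (2 * S.g - 1) := by rw [cext_last, lastCol_k_add_n hS.hm]
    _ ≤ _ := hanti ⟨h1, hg⟩ ⟨by omega, le_rfl⟩ hg

theorem CondC.evenCol_nonneg (hS : S.Std) (hc : S.CondC c) {i j : ℤ} (hi1 : 1 ≤ i)
    (hiK : i ≤ S.k + S.n) (hj1 : 1 ≤ j) (hjg : j ≤ S.g - 1) : 0 ≤ c i (2 * j) := by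
  have hk := hS.one_le_k
  have hmono := hc.monotoneOn_col (j := j + 1) (by omega) (by omega)
    ⟨le_rfl, by omega⟩ ⟨hi1, hiK⟩ hi1
  simp only [show 2 * (j + 1) - 2 = 2 * j by ring] at hmono
  rw [cext_eq_self (by omega) (by omega), cext_eq_self (by omega) (by omega)] at hmono
  have hC1 := hc.1 1 (2 * j) le_rfl hk (by omega) (by omega)
  rw [if_neg (Int.not_odd_iff_even.mpr (even_two_mul j)), add_zero] at hC1
  have := hS.ha_nonneg 1 (2 * j) le_rfl hk (by omega) (by omega)
  omega

theorem CondC.oddCol_nonneg (hS : S.Std) (hc : S.CondC c) {i j : ℤ} (hi1 : 1 ≤ i)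
    (hiK : i ≤ S.k + S.n) (hj1 : 1 ≤ j) (hjg : j ≤ S.g - 1) : 0 ≤ c i (2 * j - 1) := by
  have hanti := hc.antitoneOn_col (j := j) hj1 (by omega) ⟨hi1, hiK⟩ ⟨by omega, le_rfl⟩ hiK
  have := hc.lastRow_oddCol_nonneg hS hj1 (by omega)
  simp only at hanti
  rw [cext_eq_self (i := i) (by omega) (by omega)] at hanti
  omega

end StdData

open StdData in
/-- Lemma A.4: every `(k+n)×(2g−2)` integer matrix `c` satisfying conditions (C1)–(C6)
has all entries nonnegative. -/
theorem condC_entries_nonneg (S : StdData) (hS : S.Std) (c : ℤ → ℤ → ℤ)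
    (hc : S.CondC c) :
    ∀ i j, 1 ≤ i → i ≤ S.k + S.n → 1 ≤ j → j ≤ 2 * S.g - 2 → 0 ≤ c i j := by
  intro i j hi1 hiK hj1 hjg
  rcases Int.even_or_odd' j with ⟨l, rfl | rfl⟩
  · exact hc.evenCol_nonneg hS hi1 hiK (by omega) (by omega)
  · rw [show 2 * l + 1 = 2 * (l + 1) - 1 by ring]
    exact hc.oddCol_nonneg hS hi1 hiK (by omega) (by omega)

end BFM
end

section
/- Let c be a (k+n)×(2g-2) integer matrix satisfying conditions (C1)-(C6) and let t ∈ {1,...,2T}. Write e = c_{k+1, 2j_t-2} and f = c_{k+1, 2j_t-1}. Then the last n entries of column 2j_t-2, i.e. (c_{i,2j_t-2}) for i = k+1,...,k+n, equal (e, e+1, e+1, ..., e+m-1, e+m-1, e+m) if t is odd and (e, e, e+1, e+1, ..., e+m-1, e+m-1) if t is even; and the last n entries of column 2j_t-1, i.e. (c_{i,2j_t-1}) for i = k+1,...,k+n, equal (f, f, f-1, f-1, ..., f-m+1, f-m+1) if t is odd and (f, f-1, f-1, ..., f-m+1, f-m+1, f-m) if t is even. (This is the combination of Lemma A.2 and Corollary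 A.3 describing the pattern of the new rows of c^Γ at the columns of odd componentwise degree.) -/
/-!
Write `σⱼ(i) = c_{i,2j-2} + c_{i,2j-1}`. In a column pair of even degree the special pair of
condition (I) already lies in the first `k` rows, so every new row has `σⱼ = d - 1`; with (C2)
this says that on the new rows the first column of the next pair is the first column of this
pair plus one. Hence on the new rows column `2j₁ - 2 = 2` is `a(k+n) + 1`, and the increments of
column `2jₜ - 1` reappear, with the opposite sign, in column `2jₜ₊₁ - 2`.

Inside an odd pair, (II) makes the first column nondecreasing and the second nonincreasing, and
no two new rows coincide: the only repeated row allowed by (II) already occurs among the first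
`k` rows, strictly below the new rows. So `b_i - a_i + i` is nonincreasing along the new rows.
Its values at rows `k + 1` and `k + n` agree, because the sums there are `D - 1, D` for odd `t`
and `D, D - 1` for even `t` (by (C6) and `a_{k,2} = k₁ + 1` for `t = 1`, then by (C5)); so it is
constant, which determines the second column from the first.
-/

namespace BFM

section Sequences

variable {K d : ℤ} {a b : ℤ → ℤ}

theorem CondI.sum_eq_of_ne_special (h : CondI K d a b) {i₁ i₂ : ℤ}
    (hp : IsSpecialPair K d a b i₁ i₂) {i : ℤ} (hi : 1 ≤ i) (hiK : i ≤ K) (h₁ : i ≠ i₁)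
    (h₂ : i ≠ i₂) : a i + b i = d - 1 := by
  obtain ⟨hi₁, hi₁₂, hi₂, hs₁, hs₂⟩ := hp
  have hle := h.sum_le i hi hiK
  have hge := h.le_sum i hi hiK
  by_contra hne
  have hs : a i + b i = d := by omega
  obtain ⟨p, -, huniq⟩ := h.special
  have hp₁₂ := huniq (i₁, i₂) ⟨hi₁, hi₁₂, hi₂, hs₁, hs₂⟩
  rcases lt_or_gt_of_ne h₁ with hlt | hgt
  · have := (huniq (i, i₁) ⟨hi, hlt, by omega, hs, hs₁⟩).trans hp₁₂.symm
    exact h₁ (congrArg Prod.fst this)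
  · have := (huniq (i₁, i) ⟨hi₁, hgt, hiK, hs₁, hs⟩).trans hp₁₂.symm
    exact h₂ (congrArg Prod.snd this)

theorem CondII.lt_add_two (h : CondII K d a b) {i : ℤ} (hi : 1 ≤ i) (hiK : i + 2 ≤ K) :
    a i < a (i + 2) := by
  by_contra! hle
  have h₁ := h.mono i (i + 1) hi (by omega) (by omega)
  have h₂ := h.mono (i + 1) (i + 2) (by omega) (by omega) hiK
  have mem : ∀ l, a l = a i → 1 ≤ l → l ≤ K →
      l ∈ (Finset.Icc (1 : ℤ) K).filter fun l' => a l' = a i :=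
    fun l hl hl₁ hl₂ => Finset.mem_filter.2 ⟨Finset.mem_Icc.2 ⟨hl₁, hl₂⟩, hl⟩
  have : 2 < multCount K a (a i) := Finset.two_lt_card.2
    ⟨i, mem i rfl (by omega) (by omega), i + 1, mem _ (by omega) (by omega) (by omega),
      i + 2, mem _ (by omega) (by omega) (by omega), by omega, by omega, by omega⟩
  exact absurd (h.a_mult (a i)) (by omega)

theorem CondII.fst_eq_of_dup (h : CondII K d a b) {i j i' j' : ℤ}
    (hi : 1 ≤ i) (hij : i < j) (hj : j ≤ K) (hdup : a j = a i ∧ b j = b i)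
    (hi' : 1 ≤ i') (hij' : i' < j') (hj' : j' ≤ K)
    (hdup' : a j' = a i' ∧ b j' = b i') :
    a i = a i' := by
  obtain ⟨s, -, -, -, -, -, hpair, -⟩ := h.exists_istar
  have eq_star : ∀ i j, 1 ≤ i → i < j → j ≤ K → a j = a i ∧ b j = b i →
      a i = a s := by
    intro i j hi hij hj hdup
    by_contra hne
    have := hpair (a i) (b i) fun h => hne (congrArg Prod.fst h)
    have : 1 < ((Finset.Icc (1 : ℤ) K).filter fun l => a l = a i ∧ b l = b i).card :=
      Finset.one_lt_card.2 ⟨i, Finset.mem_filter.2 ⟨Finset.mem_Icc.2 ⟨hi, by omega⟩, rfl, rfl⟩,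
        j, Finset.mem_filter.2 ⟨Finset.mem_Icc.2 ⟨by omega, hj⟩, hdup⟩, hij.ne⟩
    omega
  rw [eq_star i j hi hij hj hdup, eq_star i' j' hi' hij' hj' hdup']

theorem antitoneOn_sub_add_of_not_dup {p q : ℤ}
    (hmono : ∀ i, p ≤ i → i < q → a i ≤ a (i + 1))
    (hanti : ∀ i, p ≤ i → i < q → b (i + 1) ≤ b i)
    (hstep : ∀ i, p ≤ i → i < q → ¬(a (i + 1) = a i ∧ b (i + 1) = b i)) :
    AntitoneOn (fun i => b i - a i + i) (Set.Icc p q) := by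
  refine antitoneOn_of_add_one_le Set.ordConnected_Icc fun i _ hi hi' => ?_
  simp only [Set.mem_Icc] at hi hi'
  have := hmono i hi.1 (by omega)
  have := hanti i hi.1 (by omega)
  have := hstep i hi.1 (by omega)
  omega

end Sequences

namespace StdData

variable {S : StdData} {c : ℤ → ℤ → ℤ}

theorem cext_of_ne {i j : ℤ} (hj₀ : j ≠ 0) (hj : j ≠ 2 * S.g - 1) :
    S.cext c i j = c i j := by
  simp [cext, hj₀, hj]

theorem aext_of_ne {i j : ℤ} (hj₀ : j ≠ 0) (hj : j ≠ 2 * S.g - 1) :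
    S.aext i j = S.a i j := by
  simp [aext, hj₀, hj]

theorem CondC.cext_fst_of_le_k (hc : S.CondC c) {i j : ℤ} (hi₁ : 1 ≤ i) (hik : i ≤ S.k)
    (hj₁ : 1 ≤ j) (hj₂ : j ≤ S.g - 1) : S.cext c i (2 * j - 2) = S.aext i (2 * j - 2) := by
  rcases hj₁.eq_or_lt with rfl | hj₁
  · simp [cext, aext]
  · rw [cext_of_ne (by omega) (by omega), aext_of_ne (by omega) (by omega),
      hc.1 i _ hi₁ hik (by omega) (by omega),
      if_neg (by rw [Int.not_odd_iff_even]; exact ⟨j - 1, by ring⟩), add_zero]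

theorem CondC.cext_snd_of_le_k (hc : S.CondC c) {i j : ℤ} (hi₁ : 1 ≤ i) (hik : i ≤ S.k)
    (hj₁ : 1 ≤ j) (hj₂ : j ≤ S.g - 1) :
    S.cext c i (2 * j - 1) = S.aext i (2 * j - 1) + S.N := by
  rw [cext_of_ne (by omega) (by omega), aext_of_ne (by omega) (by omega),
    hc.1 i _ hi₁ hik (by omega) (by omega), if_pos ⟨j - 1, by ring⟩]

theorem CondC.cext_sub_one_add_cext (hc : S.CondC c) {i j : ℤ} (hi₁ : 1 ≤ i) (hi₂ : i ≤ S.k + S.n)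
    (hj₁ : 1 ≤ j) (hj₂ : j ≤ S.g - 1) :
    S.cext c i (2 * j - 1) + S.cext c i (2 * j) = S.g + S.N - 1 := by
  rw [cext_of_ne (by omega) (by omega), cext_of_ne (by omega) (by omega)]
  exact hc.2.1 i j hi₁ hi₂ hj₁ hj₂

theorem CondC.condI_of_d_eq (hc : S.CondC c) {j : ℤ} (hj₁ : 1 ≤ j) (hj₂ : j ≤ S.g)
    (hd : S.d j = 2 * S.g - 2) :
    CondI (S.k + S.n) (S.g + S.N - 1)
      (fun i => S.cext c i (2 * j - 2)) (fun i => S.cext c i (2 * j - 1)) := by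
  have h := hc.2.2.1 j hj₁ hj₂ (by rw [hd]; exact ⟨S.g - 1, by ring⟩)
  rwa [show S.dhat j / 2 = S.g + S.N - 1 by rw [dhat, hd]; omega] at h

namespace Std

theorem five_le_k (hS : S.Std) : 5 ≤ S.k := by
  have := hS.hk1
  simp only [k]
  omega

theorem two_le_n (hS : S.Std) : 2 ≤ S.n := by
  have := hS.hm
  simp only [n]
  omega

theorem jpos_strictMonoOn (hS : S.Std) : StrictMonoOn S.jpos (Set.Icc 1 (2 * S.T)) :=
  fun _ ht _ ht' h => hS.hj_mono _ _ ht.1 h ht'.2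

theorem odd_d_jpos (hS : S.Std) {t : ℤ} (ht₁ : 1 ≤ t) (ht₂ : t ≤ 2 * S.T) :
    Odd (S.d (S.jpos t)) :=
  (hS.hodd_iff _ (hS.hj_range t ht₁ ht₂).1 (hS.hj_range t ht₁ ht₂).2).2 ⟨t, ht₁, ht₂, rfl⟩

theorem two_le_jpos (hS : S.Std) {t : ℤ} (ht₁ : 1 ≤ t) (ht₂ : t ≤ 2 * S.T) :
    2 ≤ S.jpos t := by
  rw [← hS.hj_one]
  exact (hS.jpos_strictMonoOn.le_iff_le ⟨le_rfl, by linarith [hS.hT]⟩ ⟨ht₁, ht₂⟩).2 ht₁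

theorem jpos_le_g_sub_one (hS : S.Std) {t : ℤ} (ht₁ : 1 ≤ t) (ht₂ : t ≤ 2 * S.T) :
    S.jpos t ≤ S.g - 1 := by
  have hle := (hS.hj_range t ht₁ ht₂).2
  have hodd := hS.odd_d_jpos ht₁ ht₂
  rcases hle.lt_or_eq with hlt | heq
  · omega
  · rw [heq, hS.hd_g] at hodd
    exact absurd hodd (by rw [Int.not_odd_iff_even]; exact ⟨S.g - 1, by ring⟩)

theorem d_two (hS : S.Std) : S.d 2 = 2 * S.g - 1 := by
  simpa [hS.hj_one] using (hS.hd_odd 1 le_rfl hS.hT).1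

theorem d_eq_of_jpos_lt_of_lt_jpos (hS : S.Std) {t j : ℤ} (ht₁ : 1 ≤ t) (ht₂ : t < 2 * S.T)
    (hj₁ : S.jpos t < j) (hj₂ : j < S.jpos (t + 1)) : S.d j = 2 * S.g - 2 := by
  have hjg := hS.jpos_le_g_sub_one (t := t + 1) (by omega) (by omega)
  have hj₀ := hS.two_le_jpos ht₁ ht₂.le
  have not_odd : ¬Odd (S.d j) := by
    rintro hodd
    obtain ⟨u, hu₁, hu₂, rfl⟩ := (hS.hodd_iff j (by omega) (by omega)).1 hodd
    have hmono := hS.jpos_strictMonoOn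
    have h₁ := (hmono.lt_iff_lt ⟨ht₁, ht₂.le⟩ ⟨hu₁, hu₂⟩).1 hj₁
    have h₂ := (hmono.lt_iff_lt ⟨hu₁, hu₂⟩ ⟨by omega, by omega⟩).1 hj₂
    omega
  rcases hS.hd_mem j (by omega) (by omega) with h | h | h
  · exact absurd ⟨S.g - 2, by omega⟩ (h ▸ not_odd)
  · exact h
  · exact absurd ⟨S.g - 1, by omega⟩ (h ▸ not_odd)

theorem condII_jpos (hS : S.Std) (hc : S.CondC c) {t : ℤ} (ht₁ : 1 ≤ t)
    (ht₂ : t ≤ 2 * S.T) :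
    CondII (S.k + S.n) ((S.dhat (S.jpos t) - 1) / 2)
      (fun i => S.cext c i (2 * S.jpos t - 2)) (fun i => S.cext c i (2 * S.jpos t - 1)) :=
  hc.2.2.2.1 _ (hS.hj_range t ht₁ ht₂).1 (hS.hj_range t ht₁ ht₂).2 (hS.odd_d_jpos ht₁ ht₂)

theorem newRow_sum_of_d_eq (hS : S.Std) (hc : S.CondC c) {j : ℤ} (hj₁ : 1 ≤ j)
    (hj₂ : j ≤ S.g - 1) (hd : S.d j = 2 * S.g - 2) {i : ℤ} (hi₁ : S.k < i)
    (hi₂ : i ≤ S.k + S.n) :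
    S.cext c i (2 * j - 2) + S.cext c i (2 * j - 1) = S.g + S.N - 2 := by
  obtain ⟨⟨i₁, i₂⟩, ⟨hi₁₁, hi₁₂, hi₂k, hs₁, hs₂⟩, -⟩ :=
    (hS.hs2 j hj₁ (by omega) hd).special
  -- the special pair of the first `k` rows stays special in `c`, so no new row reaches the sum
  have hlift : ∀ l, 1 ≤ l → l ≤ S.k →
      S.aext l (2 * j - 2) + S.aext l (2 * j - 1) = S.g - 1 →
      S.cext c l (2 * j - 2) + S.cext c l (2 * j - 1) = S.g + S.N - 1 := fun l hl hlk hs => by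
    rw [hc.cext_fst_of_le_k hl hlk hj₁ hj₂, hc.cext_snd_of_le_k hl hlk hj₁ hj₂]
    omega
  have := (hc.condI_of_d_eq hj₁ (by omega) hd).sum_eq_of_ne_special
    ⟨hi₁₁, hi₁₂, by omega, hlift _ hi₁₁ (by omega) hs₁, hlift _ (by omega) hi₂k hs₂⟩
    (i := i) (by omega) hi₂ (by omega) (by omega)
  omega

theorem newRow_fst_succ_of_d_eq (hS : S.Std) (hc : S.CondC c) {j : ℤ} (hj₁ : 1 ≤ j)
    (hj₂ : j ≤ S.g - 1) (hd : S.d j = 2 * S.g - 2) {i : ℤ} (hi₁ : S.k < i)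
    (hi₂ : i ≤ S.k + S.n) : S.cext c i (2 * j) = S.cext c i (2 * j - 2) + 1 := by
  have hsum := hS.newRow_sum_of_d_eq hc hj₁ hj₂ hd hi₁ hi₂
  have hlink := hc.cext_sub_one_add_cext (by linarith [hS.five_le_k]) hi₂ hj₁ hj₂
  omega

theorem newRow_fst_two (hS : S.Std) (hc : S.CondC c) {i : ℤ} (hi₁ : S.k < i)
    (hi₂ : i ≤ S.k + S.n) : S.cext c i 2 = seqA i + 1 := by
  simpa [cext] using
    hS.newRow_fst_succ_of_d_eq hc le_rfl (by linarith [hS.hg]) hS.hd_one hi₁ hi₂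

theorem newRow_fst_jpos_succ (hS : S.Std) (hc : S.CondC c) {t : ℤ} (ht₁ : 1 ≤ t)
    (ht₂ : t < 2 * S.T) {i : ℤ} (hi₁ : S.k < i) (hi₂ : i ≤ S.k + S.n) :
    S.cext c i (2 * S.jpos (t + 1) - 2) =
      S.g + S.N - 1 - S.cext c i (2 * S.jpos t - 1) + (S.jpos (t + 1) - S.jpos t - 1) := by
  have hjt := hS.two_le_jpos ht₁ ht₂.le
  have hjt' := hS.jpos_le_g_sub_one ht₁ ht₂.le
  have hjs := hS.jpos_le_g_sub_one (t := t + 1) (by omega) (by omega)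
  have climb : ∀ j, S.jpos t + 1 ≤ j → j ≤ S.jpos (t + 1) →
      S.cext c i (2 * j - 2) = S.cext c i (2 * S.jpos t) + (j - S.jpos t - 1) := by
    intro j hj
    induction j, hj using Int.leInduction with
    | base => intro; ring_nf
    | succ j hj ih =>
      intro hj'
      have hd :=
        hS.d_eq_of_jpos_lt_of_lt_jpos ht₁ ht₂ (by omega) (by omega : j < S.jpos (t + 1))
      rw [show 2 * (j + 1) - 2 = 2 * j by ring,
        hS.newRow_fst_succ_of_d_eq hc (by omega) (by omega) hd hi₁ hi₂, ih (by omega)]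
      ring
  have hlink := hc.cext_sub_one_add_cext (by linarith [hS.five_le_k]) hi₂ (by omega) hjt'
  rw [climb _ (hS.hj_mono t (t + 1) ht₁ (by omega) (by omega)) le_rfl]
  omega

theorem exists_dup_le_k (hS : S.Std) (hc : S.CondC c) {t : ℤ} (ht₁ : 1 ≤ t)
    (ht₂ : t ≤ 2 * S.T) :
    ∃ i₀, 1 ≤ i₀ ∧ i₀ + 1 ≤ S.k ∧
      S.cext c (i₀ + 1) (2 * S.jpos t - 2) = S.cext c i₀ (2 * S.jpos t - 2) ∧
      S.cext c (i₀ + 1) (2 * S.jpos t - 1) = S.cext c i₀ (2 * S.jpos t - 1) := by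
  have hj₁ := (hS.hj_range t ht₁ ht₂).1
  have hjg := hS.jpos_le_g_sub_one ht₁ ht₂
  have hII : ∃ d, CondII S.k d (fun i => S.aext i (2 * S.jpos t - 2))
      (fun i => S.aext i (2 * S.jpos t - 1)) := by
    have hodd := hS.odd_d_jpos ht₁ ht₂
    rcases hS.hd_mem _ hj₁ (by omega) with hd | hd | hd
    · exact ⟨_, hS.hs3b _ hj₁ (by omega) hd⟩
    · exact absurd hodd (by rw [hd, Int.not_odd_iff_even]; exact ⟨S.g - 1, by ring⟩)
    · exact ⟨_, hS.hs3a _ hj₁ (by omega) hd⟩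
  obtain ⟨d, hII⟩ := hII
  obtain ⟨i₀, hi₀, hi₀k, hfst, hs₀, hs₁, -⟩ := hII.exists_istar
  refine ⟨i₀, hi₀, hi₀k, ?_, ?_⟩
  · rw [hc.cext_fst_of_le_k (by omega) hi₀k (by omega) hjg,
      hc.cext_fst_of_le_k hi₀ (by omega) (by omega) hjg]
    exact hfst.symm
  · rw [hc.cext_snd_of_le_k (by omega) hi₀k (by omega) hjg,
      hc.cext_snd_of_le_k hi₀ (by omega) (by omega) hjg]
    omega

theorem not_dup_of_lt (hS : S.Std) (hc : S.CondC c) {t : ℤ} (ht₁ : 1 ≤ t)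
    (ht₂ : t ≤ 2 * S.T) {u v : ℤ} (hu : S.k ≤ u) (huv : u < v) (hv : v ≤ S.k + S.n)
    (hlt : S.cext c (S.k - 1) (2 * S.jpos t - 2) < S.cext c u (2 * S.jpos t - 2)) :
    ¬(S.cext c v (2 * S.jpos t - 2) = S.cext c u (2 * S.jpos t - 2) ∧
      S.cext c v (2 * S.jpos t - 1) = S.cext c u (2 * S.jpos t - 1)) := by
  intro hdup
  obtain ⟨i₀, hi₀, hi₀k, hdup₀⟩ := hS.exists_dup_le_k hc ht₁ ht₂
  have hII := hS.condII_jpos hc ht₁ ht₂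
  have heq := hII.fst_eq_of_dup hi₀ (lt_add_one i₀) (by omega) hdup₀ (by omega) huv hv hdup
  have hle := hII.mono i₀ (S.k - 1) hi₀ (by omega) (by omega)
  omega

theorem newRow_not_dup_succ (hS : S.Std) (hc : S.CondC c) {t : ℤ} (ht₁ : 1 ≤ t)
    (ht₂ : t ≤ 2 * S.T) {i : ℤ} (hi₁ : S.k < i) (hi₂ : i < S.k + S.n) :
    ¬(S.cext c (i + 1) (2 * S.jpos t - 2) = S.cext c i (2 * S.jpos t - 2) ∧
      S.cext c (i + 1) (2 * S.jpos t - 1) = S.cext c i (2 * S.jpos t - 1)) := by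
  have hk := hS.five_le_k
  have hII := hS.condII_jpos hc ht₁ ht₂
  have hlt := hII.lt_add_two (i := S.k - 1) (by omega) (by omega)
  have hle := hII.mono (S.k - 1 + 2) i (by omega) (by omega) hi₂.le
  refine hS.not_dup_of_lt hc ht₁ ht₂ hi₁.le (lt_add_one i) (by omega) ?_
  omega

theorem aext_k_two (hS : S.Std) : S.aext S.k 2 = S.k1 + 1 := by
  have hk₁ := hS.hk1
  have hg := hS.hg
  have hk : S.k = 2 * S.k1 + 1 := rfl
  have hI : CondI S.k (S.g - 1) (fun i => S.aext i 0) (fun i => S.aext i 1) := by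
    simpa using hS.hs2 1 le_rfl (by omega) hS.hd_one
  have hII : CondII S.k (S.g - 1) (fun i => S.aext i 2) (fun i => S.aext i 3) := by
    simpa using hS.hs3a 2 (by omega) (by omega) hS.d_two
  have hsum : ∀ i, 1 ≤ i → i ≤ S.k →
      S.aext i 0 + S.aext i 1 = (i - 1) / 2 + (S.g - 1) - S.aext i 2 := fun i hi hik => by
    have h₀ : S.aext i 0 = (i - 1) / 2 := if_pos rfl
    have := hS.hs1 i 1 hi hik le_rfl (by omega)
    rw [aext_of_ne (j := 1) (by omega) (by omega), aext_of_ne (j := 2) (by omega) (by omega)]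
    norm_num at this
    omega
  have hup := (hS.hs5 1 le_rfl (by linarith [hS.hT])).1
  norm_num [hS.hj_one] at hup
  have hlow := hI.sum_le S.k (by omega) le_rfl
  rw [hsum S.k (by omega) le_rfl] at hlow
  by_contra hne
  have hlt := hII.lt_add_two (i := 2 * S.k1 - 1) (by omega) (by omega)
  rw [show 2 * S.k1 - 1 + 2 = S.k by omega] at hlt
  have h₁ := hI.sum_le (2 * S.k1 - 1) (by omega) (by omega)
  have h₁' := hI.le_sum (2 * S.k1 - 1) (by omega) (by omega)
  rw [hsum _ (by omega) (by omega)] at h₁ h₁'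
  -- if `a_{k,2} = k₁`, then rows `2k₁ - 1` and `k` form the special pair of the first columns
  have hpair : IsSpecialPair S.k (S.g - 1) (fun i => S.aext i 0) (fun i => S.aext i 1)
      (2 * S.k1 - 1) S.k := by
    refine ⟨by omega, by omega, le_rfl, ?_, ?_⟩ <;> beta_reduce <;>
      rw [hsum _ (by omega) (by omega)] <;> omega
  have h₃ := hI.sum_eq_of_ne_special hpair (i := 2 * S.k1 - 3) (by omega) (by omega)
    (by omega) (by omega)
  beta_reduce at h₃
  rw [hsum _ (by omega) (by omega)] at h₃
  have hlt' := hII.lt_add_two (i := 2 * S.k1 - 3) (by omega) (by omega)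
  rw [show 2 * S.k1 - 3 + 2 = 2 * S.k1 - 1 by omega] at hlt'
  omega

theorem newRow_sum_jpos_one (hS : S.Std) (hc : S.CondC c) :
    S.cext c (S.k + 1) (2 * S.jpos 1 - 2) + S.cext c (S.k + 1) (2 * S.jpos 1 - 1) =
      (S.dhat (S.jpos 1) - 1) / 2 - 1 := by
  have hk := hS.five_le_k
  have hg := hS.hg
  have hn := hS.two_le_n
  have hT : 1 ≤ 2 * S.T := by linarith [hS.hT]
  -- row `k` has sum `D` and the same first entry `k₁ + 1` as row `k + 1`, so reaching `D`
  -- at row `k + 1` would repeat row `k`, which (s5) rules out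
  have hII := hS.condII_jpos hc le_rfl hT
  have hnew := hS.not_dup_of_lt hc le_rfl hT le_rfl (lt_add_one S.k) (by omega)
  have hD : (S.dhat (S.jpos 1) - 1) / 2 = S.g + S.N - 1 := by
    rw [hS.hj_one, dhat, hS.d_two]; omega
  have hcol₂ : 2 * S.jpos 1 - 2 = 2 := by rw [hS.hj_one]; norm_num
  have hcol₃ : 2 * S.jpos 1 - 1 = 3 := by rw [hS.hj_one]; norm_num
  rw [hD, hcol₂, hcol₃] at hII ⊢
  rw [hcol₂, hcol₃] at hnew
  have hfst : ∀ i, 1 ≤ i → i ≤ S.k → S.cext c i 2 = S.aext i 2 := fun i hi hik => by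
    simpa using hc.cext_fst_of_le_k (j := 2) hi hik (by omega) (by omega)
  have hsnd : S.cext c S.k 3 = S.aext S.k 3 + S.N := by
    simpa using hc.cext_snd_of_le_k (j := 2) (by omega) le_rfl (by omega) (by omega)
  have hk₂ := hfst S.k (by omega) le_rfl
  have hprev := hfst (S.k - 1) (by omega) (by omega)
  have hs5 := (hS.hs5 1 le_rfl hT).2.2
  norm_num [hS.hj_one, aext_k_two hS] at hs5
  replace hs5 := hs5 (by ring)
  have hnew₂ := hS.newRow_fst_two hc (i := S.k + 1) (by omega) (by omega)
  have hs4 := hS.hs4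
  rw [← aext_of_ne (by omega) (by omega), ← aext_of_ne (by omega) (by omega)] at hs4
  have hanti := hII.anti S.k (S.k + 1) (by omega) (by omega) (by omega)
  have hge := hII.le_sum (S.k + 1) (by omega) (by omega)
  have hkk : S.k = 2 * S.k1 + 1 := rfl
  rw [aext_k_two hS] at hk₂ hs4
  simp only [seqA] at hnew₂
  omega

theorem newRows_sum_endpoints (hS : S.Std) (hc : S.CondC c) {t : ℤ} (ht₁ : 1 ≤ t)
    (ht₂ : t ≤ 2 * S.T) :
    S.cext c (S.k + 1) (2 * S.jpos t - 2) + S.cext c (S.k + 1) (2 * S.jpos t - 1) =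
        (S.dhat (S.jpos t) - 1) / 2 - t % 2 ∧
      S.cext c (S.k + S.n) (2 * S.jpos t - 2) + S.cext c (S.k + S.n) (2 * S.jpos t - 1) =
        (S.dhat (S.jpos t) - 1) / 2 - 1 + t % 2 := by
  have hn := hS.two_le_n
  induction t, ht₁ using Int.leInduction with
  | base =>
    refine ⟨hS.newRow_sum_jpos_one hc, ?_⟩
    have hC6 := hc.2.2.2.2.2
    have e₂ : S.cext c (S.k + S.n) 2 = c (S.k + S.n) 2 :=
      cext_of_ne (by omega) (by linarith [hS.hg])
    have e₃ : S.cext c (S.k + S.n) 3 = c (S.k + S.n) 3 :=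
      cext_of_ne (by omega) (by linarith [hS.hg])
    norm_num [hS.hj_one, e₂, e₃, hC6]
  | succ t ht ih =>
    obtain ⟨ih₁, ih₂⟩ := ih (by omega)
    have hC5 := hc.2.2.2.2.1
    have h₁ := hC5 (S.k + 1) t le_rfl (by omega) ht (by omega)
    have h₂ := hC5 (S.k + S.n) t (by omega) le_rfl ht (by omega)
    rcases Int.emod_two_eq_zero_or_one t with h | h
    · have := h₁.1 (by omega)
      have := h₂.2 (by omega)
      omega
    · have := h₁.2 (by omega)
      have := h₂.1 (by omega)
      omega

theorem newRows_snd_eq_of_fst_eq (hS : S.Std) (hc : S.CondC c) {t : ℤ} (ht₁ : 1 ≤ t)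
    (ht₂ : t ≤ 2 * S.T)
    (hfst : ∀ r, 1 ≤ r → r ≤ S.n → S.cext c (S.k + r) (2 * S.jpos t - 2) =
      S.cext c (S.k + 1) (2 * S.jpos t - 2) + (r - 1 + t % 2) / 2) :
    ∀ r, 1 ≤ r → r ≤ S.n → S.cext c (S.k + r) (2 * S.jpos t - 1) =
      S.cext c (S.k + 1) (2 * S.jpos t - 1) + (r - 1 + t % 2) / 2 - (r - 1) := by
  intro r hr₁ hr₂
  have hk := hS.five_le_k
  have hII := hS.condII_jpos hc ht₁ ht₂
  -- along the new rows `b - a + i` can only decrease, and the endpoint sums make it constant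
  have hanti := antitoneOn_sub_add_of_not_dup (p := S.k + 1) (q := S.k + S.n)
    (fun i hi hiq => hII.mono i (i + 1) (by omega) (by omega) (by omega))
    (fun i hi hiq => hII.anti i (i + 1) (by omega) (by omega) (by omega))
    (fun i hi hiq => hS.newRow_not_dup_succ hc ht₁ ht₂ (by omega) hiq)
  have h₁ := hanti ⟨le_rfl, by omega⟩ ⟨(by omega : S.k + 1 ≤ S.k + r), by omega⟩ (by omega)
  have h₂ := hanti ⟨(by omega : S.k + 1 ≤ S.k + r), by omega⟩ ⟨by omega, le_rfl⟩ (by omega)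
  have hend := hS.newRows_sum_endpoints hc ht₁ ht₂
  have hr := hfst r hr₁ hr₂
  have hlast := hfst S.n (by linarith [hS.two_le_n]) le_rfl
  have hn : S.n = 2 * S.m := rfl
  simp only at h₁ h₂
  omega

theorem newRows_fst_eq (hS : S.Std) (hc : S.CondC c) {t : ℤ} (ht₁ : 1 ≤ t)
    (ht₂ : t ≤ 2 * S.T) :
    ∀ r, 1 ≤ r → r ≤ S.n → S.cext c (S.k + r) (2 * S.jpos t - 2) =
      S.cext c (S.k + 1) (2 * S.jpos t - 2) + (r - 1 + t % 2) / 2 := by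
  induction t, ht₁ using Int.leInduction with
  | base =>
    intro r hr₁ hr₂
    norm_num [hS.hj_one]
    rw [hS.newRow_fst_two hc (by omega) (by omega),
      hS.newRow_fst_two hc (by omega) (by omega)]
    have hkk : S.k = 2 * S.k1 + 1 := rfl
    simp only [seqA]
    omega
  | succ t ht ih =>
    intro r hr₁ hr₂
    have hsnd := hS.newRows_snd_eq_of_fst_eq hc ht (by omega) (ih (by omega)) r hr₁ hr₂
    rw [hS.newRow_fst_jpos_succ hc ht ht₂ (i := S.k + r) (by omega) (by omega),
      hS.newRow_fst_jpos_succ hc ht ht₂ (i := S.k + 1) (by omega) (by omega)]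
    omega

end Std

end StdData

open StdData in
/-- Lemma A.2 / Corollary A.3: let `c` satisfy (C1)–(C6) and let `t ∈ {1,…,2T}`.  Writing
`e = c_{k+1,2jₜ−2}` and `f = c_{k+1,2jₜ−1}`, the last `n = 2m` entries of column `2jₜ−2`
are `(e, e+1, e+1, …, e+m−1, e+m−1, e+m)` if `t` is odd and
`(e, e, e+1, e+1, …, e+m−1, e+m−1)` if `t` is even, and the last `n` entries of column
`2jₜ−1` are `(f, f, f−1, f−1, …, f−m+1, f−m+1)` if `t` is odd and
`(f, f−1, f−1, …, f−m+1, f−m+1, f−m)` if `t` is even; the `r`-th of these entries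
(`1 ≤ r ≤ n`, row `k + r`) is expressed by the closed formulas below. -/
theorem condC_oddDegree_column_pattern (S : StdData) (hS : S.Std) (c : ℤ → ℤ → ℤ)
    (hc : S.CondC c) (t : ℤ) (ht1 : 1 ≤ t) (ht2 : t ≤ 2 * S.T) :
    ∀ r, 1 ≤ r → r ≤ S.n →
      (Odd t →
        S.cext c (S.k + r) (2 * S.jpos t - 2) =
          S.cext c (S.k + 1) (2 * S.jpos t - 2) + r / 2 ∧
        S.cext c (S.k + r) (2 * S.jpos t - 1) =
          S.cext c (S.k + 1) (2 * S.jpos t - 1) - (r - 1) / 2) ∧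
      (Even t →
        S.cext c (S.k + r) (2 * S.jpos t - 2) =
          S.cext c (S.k + 1) (2 * S.jpos t - 2) + (r - 1) / 2 ∧
        S.cext c (S.k + r) (2 * S.jpos t - 1) =
          S.cext c (S.k + 1) (2 * S.jpos t - 1) - r / 2) := by
  intro r hr₁ hr₂
  have hfst := hS.newRows_fst_eq hc ht1 ht2
  have hsnd := hS.newRows_snd_eq_of_fst_eq hc ht1 ht2 hfst r hr₁ hr₂
  have hfst_r := hfst r hr₁ hr₂
  refine ⟨fun hodd => ?_, fun heven => ?_⟩
  · rw [Int.odd_iff] at hodd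
    constructor <;> omega
  · rw [Int.even_iff] at heven
    constructor <;> omega

end BFM
end
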